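/- (Classically correlated mediator achieving the direct-interaction speed, Eq. (14)) Let Z be the Pauli matrix Z = |0⟩⟨0| − |1⟩⟨1| on ℂ² and define M = (1/2)( Z ⊗ I ⊗ Z + I ⊗ Z ⊗ Z ) on ℂ² ⊗ ℂ² ⊗ ℂ². Let |±⟩ = (e₀ ± e₁)/√2, ψ_m = (|+⟩⊗|−⟩ + |−⟩⊗|+⟩)/√2, ψ̃_m = (|−⟩⊗|−⟩ + |+⟩⊗|+⟩)/√2, and ρ(0) = (1/2)|ψ_m⟩⟨ψ_m| ⊗ |0⟩⟨0| + (1/2)|ψ̃_m⟩⟨ψ̃_m| ⊗ |1⟩⟨1|. For t ∈ [0, π/4] let ρ_{AB}(t) = tr_C( exp(−itM) ρ(0) exp(itM) ). Then: (i) ρ_{AB}(0) is separable; (ii) the negativity of ρ_{AB}(t) with respect to the bipartition A : B equals sin t · cos t; and (iii) at t = π/4, ρ_{AB}(π/4) is pure (tr ρ_{AB}(π/4)² = 1) and has negativity 1/2, i.e., the principal qubits are maximally entangled at the optimal direct-interaction time arccos(1/√2) = π/4. -/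

import Mathlib

open scoped Matrix Kronecker ComplexOrder

noncomputable section

/-- Hermitian inner product on `n → ℂ` (conjugate-linear in the first argument). -/
def cinner {n : Type*} [Fintype n] (v w : n → ℂ) : ℂ :=
  ∑ i, (starRingEnd ℂ) (v i) * w i

/-- Tensor (Kronecker) product of vectors. -/
def tensorVec {α β : Type*} (v : α → ℂ) (w : β → ℂ) : α × β → ℂ :=
  fun p => v p.1 * w p.2

/-- The projector `|v⟩⟨v|`. -/
def vecProj {n : Type*} (v : n → ℂ) : Matrix n n ℂ :=
  Matrix.of fun i j => v i * (starRingEnd ℂ) (v j)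

/-- A density matrix: positive semidefinite with unit trace. -/
def IsDensityMatrix {n : Type*} [Fintype n] (ρ : Matrix n n ℂ) : Prop :=
  ρ.PosSemidef ∧ ρ.trace = 1

open Classical in
/-- Positive semidefinite square root (0 on non-PSD input). -/
def msqrt {n : Type*} [Fintype n] [DecidableEq n] (ρ : Matrix n n ℂ) : Matrix n n ℂ :=
  if h : ρ.PosSemidef then
    (h.1.eigenvectorUnitary : Matrix n n ℂ) *
      Matrix.diagonal ((↑) ∘ (Real.sqrt ·) ∘ h.1.eigenvalues) *
      (star h.1.eigenvectorUnitary : Matrix n n ℂ)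
  else 0

/-- Uhlmann root fidelity `F(ρ,σ) = tr √(√ρ σ √ρ)`. -/
def rootFidelity {n : Type*} [Fintype n] [DecidableEq n] (ρ σ : Matrix n n ℂ) : ℝ :=
  ((msqrt (msqrt ρ * σ * msqrt ρ)).trace).re

/-- Partial trace over the second tensor factor. -/
def ptraceC {α γ : Type*} [Fintype γ] (ρ : Matrix (α × γ) (α × γ) ℂ) : Matrix α α ℂ :=
  Matrix.of fun i j => ∑ k, ρ (i, k) (j, k)

/-- Partial trace over the first tensor factor. -/
def ptraceA {α β : Type*} [Fintype α] (ρ : Matrix (α × β) (α × β) ℂ) : Matrix β β ℂ :=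
  Matrix.of fun i j => ∑ k, ρ (k, i) (k, j)

/-- Partial transpose on the second tensor factor. -/
def ptB {α β : Type*} (ρ : Matrix (α × β) (α × β) ℂ) : Matrix (α × β) (α × β) ℂ :=
  Matrix.of fun p q => ρ (p.1, q.2) (q.1, p.2)

open Classical in
/-- Negativity: the sum of the absolute values of the negative eigenvalues of
the partial transpose (0 if the partial transpose is not Hermitian). -/
def negativity {α β : Type*} [Fintype α] [Fintype β] [DecidableEq α] [DecidableEq β]
    (ρ : Matrix (α × β) (α × β) ℂ) : ℝ :=
  if h : (ptB ρ).IsHermitian then ∑ i, max 0 (- h.eigenvalues i) else 0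

/-- A family of vectors is an orthonormal basis family (orthonormal, indexed by the
same finite type as the dimension, hence a basis). -/
def IsONB {n : Type*} [Fintype n] [DecidableEq n] (x : n → n → ℂ) : Prop :=
  ∀ j k, cinner (x j) (x k) = if j = k then 1 else 0

/-- Separability: a finite convex combination of projectors onto product unit vectors. -/
def IsSeparableDM {α β : Type*} [Fintype α] [Fintype β]
    (ρ : Matrix (α × β) (α × β) ℂ) : Prop :=
  ∃ (m : ℕ) (p : Fin m → ℝ) (a : Fin m → α → ℂ) (b : Fin m → β → ℂ),
    (∀ j, 0 ≤ p j) ∧ (∑ j, p j = 1) ∧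
    (∀ j, cinner (a j) (a j) = 1) ∧ (∀ j, cinner (b j) (b j) = 1) ∧
    ρ = ∑ j, (p j : ℂ) • vecProj (tensorVec (a j) (b j))

/-- A maximally entangled state on `ℂ^d ⊗ ℂ^d`. -/
def IsMaxEnt {d : ℕ} (Ψ : Fin d × Fin d → ℂ) : Prop :=
  ∃ x y : Fin d → Fin d → ℂ, IsONB x ∧ IsONB y ∧
    Ψ = ((Real.sqrt d : ℂ)⁻¹) • ∑ j, tensorVec (x j) (y j)

/-- Standard basis vector `e₀` of `ℂ²`. -/
def qe0 : Fin 2 → ℂ := ![1, 0]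

/-- Standard basis vector `e₁` of `ℂ²`. -/
def qe1 : Fin 2 → ℂ := ![0, 1]

/-- Pauli `X` matrix. -/
def pX : Matrix (Fin 2) (Fin 2) ℂ := !![0, 1; 1, 0]

/-- Pauli `Y` matrix. -/
def pY : Matrix (Fin 2) (Fin 2) ℂ := !![0, -Complex.I; Complex.I, 0]

/-- Pauli `Z` matrix. -/
def pZ : Matrix (Fin 2) (Fin 2) ℂ := !![1, 0; 0, -1]

/-- `|+⟩ = (e₀ + e₁)/√2`. -/
def qplus : Fin 2 → ℂ := (((Real.sqrt 2 : ℝ) : ℂ))⁻¹ • (qe0 + qe1)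

/-- `|−⟩ = (e₀ − e₁)/√2`. -/
def qminus : Fin 2 → ℂ := (((Real.sqrt 2 : ℝ) : ℂ))⁻¹ • (qe0 - qe1)

/-- `ψ_m = (|+−⟩ + |−+⟩)/√2`. -/
def ψm : Fin 2 × Fin 2 → ℂ :=
  (((Real.sqrt 2 : ℝ) : ℂ))⁻¹ • (tensorVec qplus qminus + tensorVec qminus qplus)

/-- `ψ̃_m = (|−−⟩ + |++⟩)/√2`. -/
def ψtm : Fin 2 × Fin 2 → ℂ :=
  (((Real.sqrt 2 : ℝ) : ℂ))⁻¹ • (tensorVec qminus qminus + tensorVec qplus qplus)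

/-- The classically correlated initial state
`ρ(0) = ½|ψ_m⟩⟨ψ_m| ⊗ |0⟩⟨0| + ½|ψ̃_m⟩⟨ψ̃_m| ⊗ |1⟩⟨1|`. -/
def ρcls : Matrix ((Fin 2 × Fin 2) × Fin 2) ((Fin 2 × Fin 2) × Fin 2) ℂ :=
  (2⁻¹ : ℂ) • (vecProj ψm ⊗ₖ vecProj qe0) + (2⁻¹ : ℂ) • (vecProj ψtm ⊗ₖ vecProj qe1)

/-- The Hamiltonian `M = (Z ⊗ I ⊗ Z + I ⊗ Z ⊗ Z)/2`. -/
def Mcls : Matrix ((Fin 2 × Fin 2) × Fin 2) ((Fin 2 × Fin 2) × Fin 2) ℂ :=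
  (2⁻¹ : ℂ) • ((pZ ⊗ₖ (1 : Matrix (Fin 2) (Fin 2) ℂ)) ⊗ₖ pZ +
    ((1 : Matrix (Fin 2) (Fin 2) ℂ) ⊗ₖ pZ) ⊗ₖ pZ)

/-- The reduced state of `AB` at time `t`. -/
def ρABcls (t : ℝ) : Matrix (Fin 2 × Fin 2) (Fin 2 × Fin 2) ℂ :=
  ptraceC (NormedSpace.exp ((-(Complex.I * (t : ℂ))) • Mcls) * ρcls *
    NormedSpace.exp ((Complex.I * (t : ℂ)) • Mcls))

/-!
`M` is diagonal in the computational basis, so the evolution only multiplies the entries of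
`ρ(0)` by phases. Since `ψ_m = (|00⟩ - |11⟩)/√2` and `ψ̃_m = (|00⟩ + |11⟩)/√2`, the two
mediator branches give the coherence `|00⟩⟨11|` opposite signs and opposite phases `e^{∓2it}`,
so tracing out `C` leaves
`ρ_AB(t) = ½(|00⟩⟨00| + |11⟩⟨11|) + (i sin 2t / 2)(|00⟩⟨11| - |11⟩⟨00|)`.
Its partial transpose has spectrum `{½, ½, ± sin 2t / 2}`, whence the negativity
`sin 2t / 2 = sin t cos t`; at `t = 0` the state is the mixture of `|00⟩` and `|11⟩`, and at
`t = π/4` it is the pure state `(|00⟩ - i|11⟩)/√2`.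
-/

theorem exp_smul_diagonal {n : Type*} [Fintype n] [DecidableEq n] (c : ℂ) (d : n → ℂ) :
    NormedSpace.exp (c • Matrix.diagonal d) =
      Matrix.diagonal fun i => Complex.exp (c * d i) := by
  rw [← Matrix.diagonal_smul, Matrix.exp_diagonal]
  congr 1
  funext i
  rw [Pi.coe_exp, Pi.smul_apply, smul_eq_mul, Complex.exp_eq_exp_ℂ]

theorem ptraceC_exp_diagonal_conj_apply {α γ : Type*} [Fintype α] [DecidableEq α] [Fintype γ]
    [DecidableEq γ] (c : ℂ) (d : α × γ → ℂ) (ρ : Matrix (α × γ) (α × γ) ℂ) (i j : α) :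
    ptraceC (NormedSpace.exp ((-c) • Matrix.diagonal d) * ρ *
        NormedSpace.exp (c • Matrix.diagonal d)) i j =
      ∑ k, Complex.exp (c * (d (j, k) - d (i, k))) * ρ (i, k) (j, k) := by
  simp only [ptraceC, exp_smul_diagonal, Matrix.of_apply, Matrix.diagonal_mul,
    Matrix.mul_diagonal]
  refine Finset.sum_congr rfl fun k _ => ?_
  rw [mul_sub, sub_eq_add_neg, Complex.exp_add, neg_mul]
  ring

theorem vecProj_smul {n : Type*} (c : ℂ) (v : n → ℂ) :
    vecProj (c • v) = (c * starRingEnd ℂ c) • vecProj v := by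
  ext i j
  simp only [vecProj, Matrix.of_apply, Matrix.smul_apply, Pi.smul_apply, smul_eq_mul, map_mul]
  ring

open Polynomial in
theorem negativity_eq_of_charpoly {α β : Type*} [Fintype α] [Fintype β] [DecidableEq α]
    [DecidableEq β] {ρ : Matrix (α × β) (α × β) ℂ} (hρ : (ptB ρ).IsHermitian) (m : Multiset ℝ)
    (h : (ptB ρ).charpoly = (m.map fun x => X - C (x : ℂ)).prod) :
    negativity ρ = (m.map fun x => max 0 (-x)).sum := by
  have hspec : Finset.univ.val.map hρ.eigenvalues = m := by
    apply Multiset.map_injective Complex.ofReal_injective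
    have hroots := hρ.roots_charpoly_eq_eigenvalues
    rw [h, roots_multiset_prod_X_sub_C] at hroots
    simpa [Multiset.map_map] using hroots.symm
  rw [negativity, dif_pos hρ, ← hspec, Multiset.map_map]
  rfl

theorem pZ_eq_diagonal : pZ = Matrix.diagonal ![1, -1] := by
  ext i j
  fin_cases i <;> fin_cases j <;> simp [pZ]

theorem Mcls_eq_diagonal :
    Mcls = Matrix.diagonal fun p => (![1, -1] p.1.1 + ![1, -1] p.1.2) * ![1, -1] p.2 / 2 := by
  rw [Mcls, pZ_eq_diagonal, ← Matrix.diagonal_one, Matrix.diagonal_kronecker_diagonal,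
    Matrix.diagonal_kronecker_diagonal, Matrix.diagonal_kronecker_diagonal,
    Matrix.diagonal_kronecker_diagonal, Matrix.diagonal_add, ← Matrix.diagonal_smul]
  congr 1
  funext p
  simp only [Pi.smul_apply, smul_eq_mul, mul_one, one_mul]
  ring

theorem inv_sqrt_two_mul_self : ((√2 : ℝ) : ℂ)⁻¹ * ((√2 : ℝ) : ℂ)⁻¹ = 2⁻¹ := by
  rw [← mul_inv, ← Complex.ofReal_mul, Real.mul_self_sqrt zero_le_two, Complex.ofReal_ofNat]

theorem ψm_eq : ψm = ((√2 : ℝ) : ℂ)⁻¹ • (tensorVec qe0 qe0 - tensorVec qe1 qe1) := by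
  have : tensorVec qplus qminus + tensorVec qminus qplus =
      tensorVec qe0 qe0 - tensorVec qe1 qe1 := by
    funext p
    fin_cases p <;> simp [tensorVec, qplus, qminus, qe0, qe1, inv_sqrt_two_mul_self] <;> norm_num
  rw [ψm, this]

theorem ψtm_eq : ψtm = ((√2 : ℝ) : ℂ)⁻¹ • (tensorVec qe0 qe0 + tensorVec qe1 qe1) := by
  have : tensorVec qminus qminus + tensorVec qplus qplus =
      tensorVec qe0 qe0 + tensorVec qe1 qe1 := by
    funext p
    fin_cases p <;> simp [tensorVec, qplus, qminus, qe0, qe1, inv_sqrt_two_mul_self] <;> norm_num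
  rw [ψtm, this]

theorem vecProj_inv_sqrt_two_smul {n : Type*} (v : n → ℂ) :
    vecProj (((√2 : ℝ) : ℂ)⁻¹ • v) = (2⁻¹ : ℂ) • vecProj v := by
  rw [vecProj_smul, map_inv₀, Complex.conj_ofReal, inv_sqrt_two_mul_self]

def reducedState (s : ℝ) : Matrix (Fin 2 × Fin 2) (Fin 2 × Fin 2) ℂ :=
  (2⁻¹ : ℂ) • (vecProj (tensorVec qe0 qe0) + vecProj (tensorVec qe1 qe1)) +
    (Complex.I * s / 2) • (Matrix.vecMulVec (tensorVec qe0 qe0) (tensorVec qe1 qe1) -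
      Matrix.vecMulVec (tensorVec qe1 qe1) (tensorVec qe0 qe0))

theorem ρABcls_eq_reducedState (t : ℝ) : ρABcls t = reducedState (Real.sin (2 * t)) := by
  ext p q
  rw [ρABcls, Mcls_eq_diagonal, ptraceC_exp_diagonal_conj_apply, ρcls, ψm_eq, ψtm_eq,
    vecProj_inv_sqrt_two_smul, vecProj_inv_sqrt_two_smul]
  have hsin : Complex.I * Complex.sin (2 * t) =
      (Complex.exp (2 * t * Complex.I) - Complex.exp (-(2 * t) * Complex.I)) / 2 := by
    rw [Complex.sin]
    linear_combination
      (Complex.exp (-(2 * t) * Complex.I) - Complex.exp (2 * t * Complex.I)) / 2 * Complex.I_mul_I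
  fin_cases p <;> fin_cases q <;>
    simp [Fin.sum_univ_two, reducedState, vecProj, tensorVec, qe0, qe1, Matrix.vecMulVec] <;>
    ring_nf at hsin ⊢
  · linear_combination (-1 / 2 : ℂ) * hsin
  · linear_combination (1 / 2 : ℂ) * hsin

theorem isSeparableDM_reducedState_zero : IsSeparableDM (reducedState 0) := by
  refine ⟨2, ![2⁻¹, 2⁻¹], ![qe0, qe1], ![qe0, qe1], ?_, ?_, ?_, ?_, ?_⟩
  · intro j; fin_cases j <;> norm_num
  · norm_num [Fin.sum_univ_two]
  · intro j; fin_cases j <;> simp [cinner, qe0, qe1]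
  · intro j; fin_cases j <;> simp [cinner, qe0, qe1]
  · simp [reducedState, Fin.sum_univ_two, smul_add, -Complex.coe_smul]

theorem trace_reducedState_one_mul_self : (reducedState 1 * reducedState 1).trace = 1 := by
  simp [Matrix.trace, Matrix.mul_apply, Fintype.sum_prod_type, Fin.sum_univ_two, reducedState,
    vecProj, tensorVec, qe0, qe1, Matrix.vecMulVec]
  linear_combination (-1 / 2 : ℂ) * Complex.I_mul_I

theorem isHermitian_ptB_reducedState (s : ℝ) : (ptB (reducedState s)).IsHermitian := by
  ext p q
  fin_cases p <;> fin_cases q <;>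
    simp [ptB, reducedState, vecProj, tensorVec, qe0, qe1, Matrix.vecMulVec] <;> ring

theorem reindex_ptB_reducedState (s : ℝ) :
    Matrix.reindex finProdFinEquiv finProdFinEquiv (ptB (reducedState s)) =
      !![2⁻¹, 0, 0, 0;
        0, 0, Complex.I * s / 2, 0;
        0, -(Complex.I * s / 2), 0, 0;
        0, 0, 0, 2⁻¹] := by
  ext i j
  fin_cases i <;> fin_cases j <;>
    simp [finProdFinEquiv, Fin.divNat, Fin.modNat, ptB, reducedState, vecProj, tensorVec, qe0, qe1,
      Matrix.vecMulVec]

open Polynomial in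
theorem charpoly_ptB_reducedState (s : ℝ) :
    (ptB (reducedState s)).charpoly =
      (({2⁻¹, 2⁻¹, s / 2, -(s / 2)} : Multiset ℝ).map fun x => X - C (x : ℂ)).prod := by
  rw [← Matrix.charpoly_reindex finProdFinEquiv, reindex_ptB_reducedState, Matrix.charpoly]
  have hC_sq : C (Complex.I * s / 2) * C (Complex.I * s / 2) =
      -(C ((s : ℂ) / 2) * C ((s : ℂ) / 2)) := by
    rw [← C_mul, ← C_mul, ← C_neg]
    congr 1
    linear_combination ((s : ℂ) ^ 2 / 4) * Complex.I_mul_I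
  simp [Matrix.charmatrix_apply, Matrix.det_succ_row_zero, Fin.sum_univ_succ,
    Matrix.diagonal_apply, -mul_eq_mul_left_iff]
  linear_combination (X - C (2⁻¹ : ℂ)) ^ 2 * hC_sq

theorem negativity_reducedState {s : ℝ} (hs : 0 ≤ s) : negativity (reducedState s) = s / 2 := by
  rw [negativity_eq_of_charpoly (isHermitian_ptB_reducedState s) _ (charpoly_ptB_reducedState s)]
  have hneg : max 0 (-(s / 2)) = 0 := max_eq_left (by linarith)
  have hpos : max 0 (s / 2) = s / 2 := max_eq_right (by linarith)
  simp [Multiset.insert_eq_cons, hneg, hpos]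

/-- classically correlated mediator achieving the direct-interaction
speed: the reduced state is initially separable, its negativity equals `sin t · cos t`,
and at `t = π/4 = arccos(1/√2)` it is pure and maximally entangled. -/
theorem classical_mediator_speed :
    IsSeparableDM (ρABcls 0) ∧
    (∀ t ∈ Set.Icc (0 : ℝ) (Real.pi / 4),
      negativity (ρABcls t) = Real.sin t * Real.cos t) ∧
    (ρABcls (Real.pi / 4) * ρABcls (Real.pi / 4)).trace = 1 ∧
    negativity (ρABcls (Real.pi / 4)) = 1 / 2 ∧
    Real.arccos (Real.sqrt 2)⁻¹ = Real.pi / 4 := by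
  have hπ4 : ρABcls (Real.pi / 4) = reducedState 1 := by
    rw [ρABcls_eq_reducedState, show 2 * (Real.pi / 4) = Real.pi / 2 by ring, Real.sin_pi_div_two]
  refine ⟨?_, fun t ht => ?_, ?_, ?_, ?_⟩
  · simpa [ρABcls_eq_reducedState] using isSeparableDM_reducedState_zero
  · have hsin : 0 ≤ Real.sin (2 * t) :=
      Real.sin_nonneg_of_nonneg_of_le_pi (by linarith [ht.1]) (by linarith [ht.2, Real.pi_pos])
    rw [ρABcls_eq_reducedState, negativity_reducedState hsin, Real.sin_two_mul]
    ring
  · rw [hπ4, trace_reducedState_one_mul_self]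
  · rw [hπ4, negativity_reducedState zero_le_one]
  · rw [← Real.sqrt_div_self, ← Real.cos_pi_div_four,
      Real.arccos_cos (by positivity) (by linarith [Real.pi_pos])]

end
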